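/- arXiv:1211.0334 — 2 statements merged into one kernel-verified Lean document; each statement's English description precedes it below -/
import Mathlib

section
/- With L̄ᵢ = 2t^{m/2+1}∂ᵢ + (m+2)(xᵢ/t^{m/2})∂_t and L_{ij} = xᵢ∂ⱼ − xⱼ∂ᵢ on {t>0} ⊂ ℝ^{1+n}, one has [L̄ᵢ, L̄ⱼ] = 2(m+1)(m+2) L_{ij} + (m(m+2)/2) ((xⱼ/t^{m/2+1}) L̄ᵢ − (xᵢ/t^{m/2+1}) L̄ⱼ) for all i ≠ j. -/
/-- Partial derivative in the `i`-th coordinate of `ℝ^k`. -/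
noncomputable def pd {k : ℕ} (i : Fin k) (u : (Fin k → ℝ) → ℝ) : (Fin k → ℝ) → ℝ :=
  fun p => fderiv ℝ u p (Pi.single i 1)

/-- `L₀ = 2t∂_t + (m+2)∑ᵢ xᵢ∂ᵢ`, with coordinates `p 0 = t`, `p i.succ = xᵢ`. -/
noncomputable def L0 (n m : ℕ) (u : (Fin (n + 1) → ℝ) → ℝ) : (Fin (n + 1) → ℝ) → ℝ :=
  fun p => 2 * p 0 * pd 0 u p + (m + 2) * ∑ i : Fin n, p i.succ * pd i.succ u p

/-- `L̄ᵢ = 2t^{m/2+1}∂ᵢ + (m+2)(xᵢ/t^{m/2})∂_t`. -/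
noncomputable def Lb (n m : ℕ) (i : Fin n) (u : (Fin (n + 1) → ℝ) → ℝ) : (Fin (n + 1) → ℝ) → ℝ :=
  fun p => 2 * p 0 ^ ((m : ℝ) / 2 + 1) * pd i.succ u p
    + (m + 2) * (p i.succ / p 0 ^ ((m : ℝ) / 2)) * pd 0 u p

/-- Rotation field `L_{ij} = xᵢ∂ⱼ − xⱼ∂ᵢ`. -/
noncomputable def Lrot (n : ℕ) (i j : Fin n) (u : (Fin (n + 1) → ℝ) → ℝ) :
    (Fin (n + 1) → ℝ) → ℝ :=
  fun p => p i.succ * pd j.succ u p - p j.succ * pd i.succ u p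

/-- The generalized Tricomi operator `P = ∂_t² − t^m Δ`. -/
noncomputable def Tric (n m : ℕ) (u : (Fin (n + 1) → ℝ) → ℝ) : (Fin (n + 1) → ℝ) → ℝ :=
  fun p => pd 0 (pd 0 u) p - p 0 ^ m * ∑ i : Fin n, pd i.succ (pd i.succ u) p

section aux
variable {n m : ℕ} {u : (Fin (n + 1) → ℝ) → ℝ}

lemma hasFDerivAt_pd (hu : ContDiff ℝ (⊤ : ℕ∞) u) (p : Fin (n + 1) → ℝ) (l : Fin (n + 1)) :
    HasFDerivAt (pd l u) ((fderiv ℝ (fderiv ℝ u) p).flip (Pi.single l 1)) p := by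
  have hu' : ContDiff ℝ (⊤ : ℕ∞) (fderiv ℝ u) := hu.fderiv_right (by simp)
  have h1 : HasFDerivAt (fderiv ℝ u) (fderiv ℝ (fderiv ℝ u) p) p :=
    (hu'.differentiable (by simp) p).hasFDerivAt
  have := h1.clm_apply (hasFDerivAt_const (Pi.single l (1:ℝ)) p)
  simp at this; exact this

lemma pd_symm (hu : ContDiff ℝ (⊤ : ℕ∞) u) (p : Fin (n + 1) → ℝ) (k l : Fin (n + 1)) :
    pd k (pd l u) p = pd l (pd k u) p := by
  have hsym := second_derivative_symmetric
    (f := u) (f' := fderiv ℝ u) (f'' := fderiv ℝ (fderiv ℝ u) p) (x := p)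
    (fun y => (hu.differentiable (by simp) y).hasFDerivAt)
    ((((hu.fderiv_right (m := (⊤ : ℕ∞)) (by simp)).differentiable (by simp)) p).hasFDerivAt)
    (Pi.single k 1) (Pi.single l 1)
  rw [pd, pd, (hasFDerivAt_pd hu p l).fderiv, (hasFDerivAt_pd hu p k).fderiv]
  simpa using hsym
end aux


section aux2
variable {n m : ℕ} {u : (Fin (n + 1) → ℝ) → ℝ}

lemma pd_Lb (hu : ContDiff ℝ (⊤ : ℕ∞) u) (p : Fin (n + 1) → ℝ) (hp : 0 < p 0)
    (j : Fin n) (k : Fin (n + 1)) :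
    pd k (Lb n m j u) p =
      2 * p 0 ^ ((m : ℝ) / 2 + 1) * pd k (pd j.succ u) p
      + ((m : ℝ) + 2) * (p j.succ * p 0 ^ (-((m : ℝ) / 2))) * pd k (pd 0 u) p
      + 2 * (((m : ℝ) / 2 + 1) * p 0 ^ ((m : ℝ) / 2)
          * (Pi.single k 1 : Fin (n+1) → ℝ) 0) * pd j.succ u p
      + ((m : ℝ) + 2) * ((Pi.single k 1 : Fin (n+1) → ℝ) j.succ * p 0 ^ (-((m : ℝ) / 2))
          + p j.succ * (-((m : ℝ) / 2) * p 0 ^ (-((m : ℝ) / 2) - 1))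
            * (Pi.single k 1 : Fin (n+1) → ℝ) 0) * pd 0 u p := by
  have ht : p 0 ≠ 0 := hp.ne'
  have hcoord : ∀ l : Fin (n + 1),
      HasFDerivAt (fun q : Fin (n + 1) → ℝ => q l)
        (ContinuousLinearMap.proj l : (Fin (n+1) → ℝ) →L[ℝ] ℝ) p :=
    fun l => (ContinuousLinearMap.proj l : (Fin (n+1) → ℝ) →L[ℝ] ℝ).hasFDerivAt
  have hpow : ∀ r : ℝ, HasFDerivAt (fun q : Fin (n + 1) → ℝ => q 0 ^ r)
      ((r * p 0 ^ (r - 1)) • (ContinuousLinearMap.proj 0 : (Fin (n+1) → ℝ) →L[ℝ] ℝ)) p :=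
    fun r => (hcoord 0).rpow_const (Or.inl ht)
  have hd := hasFDerivAt_pd hu p
  have hA1 := ((hpow ((m : ℝ) / 2 + 1)).const_mul (2:ℝ)).mul (hd j.succ)
  have hB1 := (((hcoord j.succ).mul (hpow (-((m : ℝ) / 2)))).const_mul ((m : ℝ) + 2)).mul (hd 0)
  have H' := hA1.add hB1
  have hev : Lb n m j u =ᶠ[nhds p]
      (fun q => 2 * q 0 ^ ((m : ℝ) / 2 + 1) * pd j.succ u q
        + ((m : ℝ) + 2) * (q j.succ * q 0 ^ (-((m : ℝ) / 2))) * pd 0 u q) := by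
    filter_upwards [(isOpen_lt continuous_const (continuous_apply 0)).eventually_mem hp] with q hq
    have hdiv : q j.succ / q 0 ^ ((m : ℝ) / 2) = q j.succ * q 0 ^ (-((m : ℝ) / 2)) := by
      rw [Real.rpow_neg (le_of_lt hq)]; ring
    simp only [Lb, hdiv]
  have H : HasFDerivAt (Lb n m j u) _ p := H'.congr_of_eventuallyEq hev
  have hpd2 : ∀ l, pd k (pd l u) p
      = (fderiv ℝ (fderiv ℝ u) p) (Pi.single k 1) (Pi.single l 1) := by
    intro l
    rw [pd, (hd l).fderiv]; simp
  have hgoal : pd k (Lb n m j u) p = fderiv ℝ (Lb n m j u) p (Pi.single k 1) := rfl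
  rw [hgoal, H.fderiv, hpd2, hpd2]
  have e1 : (m : ℝ) / 2 + 1 - 1 = (m : ℝ) / 2 := by ring
  simp only [ContinuousLinearMap.add_apply, ContinuousLinearMap.smul_apply,
    ContinuousLinearMap.proj_apply, ContinuousLinearMap.flip_apply, smul_eq_mul, e1, pd,
    Pi.mul_apply]
  ring
end aux2


/-- `[L̄ᵢ, L̄ⱼ] = 2(m+1)(m+2) L_{ij} + (m(m+2)/2)((xⱼ/t^{m/2+1}) L̄ᵢ − (xᵢ/t^{m/2+1}) L̄ⱼ)`
on `{t > 0}`, for `i ≠ j`. -/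
theorem stmt8 (n m : ℕ) (u : (Fin (n + 1) → ℝ) → ℝ) (hu : ContDiff ℝ (⊤ : ℕ∞) u)
    (p : Fin (n + 1) → ℝ) (hp : 0 < p 0) (i j : Fin n) (hij : i ≠ j) :
    Lb n m i (Lb n m j u) p - Lb n m j (Lb n m i u) p =
      2 * (m + 1) * (m + 2) * Lrot n i j u p
        + (m * (m + 2) / 2) *
          ((p j.succ / p 0 ^ ((m : ℝ) / 2 + 1)) * Lb n m i u p
            - (p i.succ / p 0 ^ ((m : ℝ) / 2 + 1)) * Lb n m j u p) := by
  have ht : p 0 ≠ 0 := hp.ne'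
  have expand : ∀ (l : Fin n) (v : (Fin (n+1) → ℝ) → ℝ), Lb n m l v p
      = 2 * p 0 ^ ((m:ℝ)/2+1) * pd l.succ v p
        + ((m:ℝ)+2) * (p l.succ / p 0 ^ ((m:ℝ)/2)) * pd 0 v p := fun l v => rfl
  rw [expand i (Lb n m j u), expand j (Lb n m i u), expand i u, expand j u,
    pd_Lb hu p hp j i.succ, pd_Lb hu p hp j 0, pd_Lb hu p hp i j.succ, pd_Lb hu p hp i 0,
    pd_symm hu p 0 j.succ, pd_symm hu p 0 i.succ, pd_symm hu p j.succ i.succ]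
  have hsij : (Pi.single (i.succ) 1 : Fin (n+1) → ℝ) j.succ = 0 := by
    rw [Pi.single_apply, if_neg]
    exact fun h => hij ((Fin.succ_injective n) h.symm)
  have hsji : (Pi.single (j.succ) 1 : Fin (n+1) → ℝ) i.succ = 0 := by
    rw [Pi.single_apply, if_neg]
    exact fun h => hij ((Fin.succ_injective n) h.symm).symm
  have hsi0 : (Pi.single (i.succ) 1 : Fin (n+1) → ℝ) 0 = 0 := by
    rw [Pi.single_apply, if_neg (Fin.succ_ne_zero i).symm]
  have hsj0 : (Pi.single (j.succ) 1 : Fin (n+1) → ℝ) 0 = 0 := by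
    rw [Pi.single_apply, if_neg (Fin.succ_ne_zero j).symm]
  have hs00 : (Pi.single (0 : Fin (n+1)) 1 : Fin (n+1) → ℝ) 0 = 1 := by simp
  have hs0i : (Pi.single (0 : Fin (n+1)) 1 : Fin (n+1) → ℝ) i.succ = 0 := by
    rw [Pi.single_apply, if_neg (Fin.succ_ne_zero i)]
  have hs0j : (Pi.single (0 : Fin (n+1)) 1 : Fin (n+1) → ℝ) j.succ = 0 := by
    rw [Pi.single_apply, if_neg (Fin.succ_ne_zero j)]
  rw [hsij, hsji, hsi0, hsj0, hs00, hs0i, hs0j]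
  have h1 : p 0 ^ ((m:ℝ)/2 + 1) = p 0 ^ ((m:ℝ)/2) * p 0 := Real.rpow_add_one ht _
  have h2 : p 0 ^ (-((m:ℝ)/2)) = (p 0 ^ ((m:ℝ)/2))⁻¹ := by
    rw [Real.rpow_neg hp.le]
  have h3 : p 0 ^ (-((m:ℝ)/2) - 1) = (p 0 ^ ((m:ℝ)/2) * p 0)⁻¹ := by
    rw [show -((m:ℝ)/2) - 1 = -((m:ℝ)/2 + 1) by ring, Real.rpow_neg hp.le, h1]
  have hA : p 0 ^ ((m:ℝ)/2) ≠ 0 := (Real.rpow_pos_of_pos hp _).ne'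
  rw [Lrot, h1, h2, h3]
  field_simp
  ring
end

section
/- Let P = ∂_t² − t^m Δ and L̄ᵢ = 2t^{m/2+1}∂ᵢ + (m+2)(xᵢ/t^{m/2})∂_t on {t>0}. Then [P, L̄ᵢ] = −m(m+2)(xᵢ/t^{m/2+1}) P + (m(m+2)/(4t²)) L̄ᵢ as operators on smooth functions with t > 0. -/
open scoped Topology

noncomputable def ev {k : ℕ} (i : Fin k) : Fin k → ℝ := Pi.single i 1

section tool
variable {k : ℕ}

lemma pd_congr {i : Fin k} {f g : (Fin k → ℝ) → ℝ} {p : Fin k → ℝ} (h : f =ᶠ[𝓝 p] g) :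
    pd i f p = pd i g p := by unfold pd; rw [h.fderiv_eq]

lemma pd_add {i : Fin k} {f g : (Fin k → ℝ) → ℝ} {p : Fin k → ℝ}
    (hf : DifferentiableAt ℝ f p) (hg : DifferentiableAt ℝ g p) :
    pd i (fun q => f q + g q) p = pd i f p + pd i g p := by
  unfold pd; rw [fderiv_fun_add hf hg]; simp

lemma pd_sub {i : Fin k} {f g : (Fin k → ℝ) → ℝ} {p : Fin k → ℝ}
    (hf : DifferentiableAt ℝ f p) (hg : DifferentiableAt ℝ g p) :
    pd i (fun q => f q - g q) p = pd i f p - pd i g p := by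
  unfold pd; rw [fderiv_fun_sub hf hg]; simp

lemma pd_mul {i : Fin k} {f g : (Fin k → ℝ) → ℝ} {p : Fin k → ℝ}
    (hf : DifferentiableAt ℝ f p) (hg : DifferentiableAt ℝ g p) :
    pd i (fun q => f q * g q) p = pd i f p * g p + f p * pd i g p := by
  unfold pd; rw [fderiv_fun_mul hf hg]; simp; ring

lemma pd_const_mul {i : Fin k} {f : (Fin k → ℝ) → ℝ} {p : Fin k → ℝ} (c : ℝ)
    (hf : DifferentiableAt ℝ f p) :
    pd i (fun q => c * f q) p = c * pd i f p := by
  unfold pd; rw [fderiv_const_mul hf]; simp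

lemma pd_sum {i : Fin k} {ι : Type*} {s : Finset ι} {f : ι → (Fin k → ℝ) → ℝ} {p : Fin k → ℝ}
    (hf : ∀ j ∈ s, DifferentiableAt ℝ (f j) p) :
    pd i (fun q => ∑ j ∈ s, f j q) p = ∑ j ∈ s, pd i (f j) p := by
  unfold pd; rw [fderiv_fun_sum hf]; simp

lemma pd_coord {i j : Fin k} {p : Fin k → ℝ} :
    pd i (fun q => q j) p = ev i j := by
  unfold pd
  have h : (fun q : Fin k → ℝ => q j) = ⇑(ContinuousLinearMap.proj j : (Fin k → ℝ) →L[ℝ] ℝ) := rfl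
  rw [h, ContinuousLinearMap.fderiv]
  rfl

lemma diff_coord {j : Fin k} {p : Fin k → ℝ} : DifferentiableAt ℝ (fun q : Fin k → ℝ => q j) p :=
  (ContinuousLinearMap.proj j : (Fin k → ℝ) →L[ℝ] ℝ).differentiableAt

lemma hasFDerivAt_rpow_coord {j : Fin k} {p : Fin k → ℝ} (h : p j ≠ 0) (r : ℝ) :
    HasFDerivAt (fun q : Fin k → ℝ => q j ^ r)
      ((r * p j ^ (r - 1)) • (ContinuousLinearMap.proj j : (Fin k → ℝ) →L[ℝ] ℝ)) p := by
  have h1 : HasDerivAt (fun t : ℝ => t ^ r) (r * p j ^ (r - 1)) (p j) :=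
    Real.hasDerivAt_rpow_const (Or.inl h)
  exact h1.comp_hasFDerivAt p (ContinuousLinearMap.proj j : (Fin k → ℝ) →L[ℝ] ℝ).hasFDerivAt

lemma pd_rpow {i j : Fin k} {p : Fin k → ℝ} (h : p j ≠ 0) (r : ℝ) :
    pd i (fun q => q j ^ r) p = r * p j ^ (r - 1) * ev i j := by
  unfold pd; rw [(hasFDerivAt_rpow_coord h r).fderiv]; simp [ev]

lemma diff_rpow {j : Fin k} {p : Fin k → ℝ} (h : p j ≠ 0) (r : ℝ) :
    DifferentiableAt ℝ (fun q : Fin k → ℝ => q j ^ r) p :=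
  (hasFDerivAt_rpow_coord h r).differentiableAt

lemma hasFDerivAt_pow_coord {j : Fin k} (p : Fin k → ℝ) (M : ℕ) :
    HasFDerivAt (fun q : Fin k → ℝ => q j ^ M)
      (((M : ℝ) * p j ^ (M - 1)) • (ContinuousLinearMap.proj j : (Fin k → ℝ) →L[ℝ] ℝ)) p := by
  have h1 : HasDerivAt (fun t : ℝ => t ^ M) ((M : ℝ) * p j ^ (M - 1)) (p j) := hasDerivAt_pow M (p j)
  exact h1.comp_hasFDerivAt p (ContinuousLinearMap.proj j : (Fin k → ℝ) →L[ℝ] ℝ).hasFDerivAt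

lemma pd_pow {i j : Fin k} {p : Fin k → ℝ} (M : ℕ) :
    pd i (fun q => q j ^ M) p = (M : ℝ) * p j ^ (M - 1) * ev i j := by
  unfold pd; rw [(hasFDerivAt_pow_coord p M).fderiv]; simp [ev]

lemma diff_pow {j : Fin k} {p : Fin k → ℝ} (M : ℕ) :
    DifferentiableAt ℝ (fun q : Fin k → ℝ => q j ^ M) p :=
  (hasFDerivAt_pow_coord p M).differentiableAt

lemma pd_smooth {i : Fin k} {u : (Fin k → ℝ) → ℝ} (hu : ContDiff ℝ (⊤ : ℕ∞) u) :
    ContDiff ℝ (⊤ : ℕ∞) (pd i u) := by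
  have h1 : ContDiff ℝ (⊤ : ℕ∞) (fderiv ℝ u) := hu.fderiv_right (by simp)
  exact (ContinuousLinearMap.apply ℝ ℝ (Pi.single i 1)).contDiff.comp h1

lemma pd_comm {i j : Fin k} {u : (Fin k → ℝ) → ℝ} (hu : ContDiff ℝ (⊤ : ℕ∞) u) :
    pd i (pd j u) = pd j (pd i u) := by
  funext p
  have hsym : IsSymmSndFDerivAt ℝ u p := (hu.contDiffAt).isSymmSndFDerivAt (by rw [minSmoothness_of_isRCLikeNormedField]; exact (WithTop.coe_le_coe.mpr le_top : ((2:ℕ∞) : WithTop ℕ∞) ≤ ((⊤:ℕ∞) : WithTop ℕ∞)))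
  have hd : DifferentiableAt ℝ (fderiv ℝ u) p :=
    ((hu.fderiv_right (by simp) : ContDiff ℝ (⊤ : ℕ∞) (fderiv ℝ u)).differentiable (by simp)).differentiableAt
  have key : ∀ (l : Fin k) (v : Fin k → ℝ), pd l (fun x => fderiv ℝ u x v) p =
      fderiv ℝ (fderiv ℝ u) p (Pi.single l 1) v := by
    intro l v
    unfold pd
    have hco : (fun x => fderiv ℝ u x v) =
        (⇑(ContinuousLinearMap.apply ℝ ℝ v) ∘ fderiv ℝ u) := rfl
    rw [hco, fderiv_comp p (ContinuousLinearMap.apply ℝ ℝ v).differentiableAt hd]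
    simp
  show pd i (pd j u) p = pd j (pd i u) p
  have e1 : pd i (pd j u) p = pd i (fun x => fderiv ℝ u x (Pi.single j 1)) p := rfl
  have e2 : pd j (pd i u) p = pd j (fun x => fderiv ℝ u x (Pi.single i 1)) p := rfl
  rw [e1, e2, key i _, key j _]
  exact hsym.eq _ _

end tool

section shapes
variable {n : ℕ}

noncomputable def sh1 {n : ℕ} (r : ℝ) (w : (Fin (n+1) → ℝ) → ℝ) : (Fin (n+1) → ℝ) → ℝ :=
  fun q => q 0 ^ r * w q

noncomputable def sh2 {n : ℕ} (j : Fin n) (r : ℝ) (w : (Fin (n+1) → ℝ) → ℝ) :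
    (Fin (n+1) → ℝ) → ℝ :=
  fun q => q j.succ * (q 0 ^ r * w q)

variable {r r' : ℝ} {w : (Fin (n+1) → ℝ) → ℝ} {q : Fin (n+1) → ℝ}

lemma sh1_diff (hq : q 0 ≠ 0) (hw : DifferentiableAt ℝ w q) :
    DifferentiableAt ℝ (sh1 r w) q := (diff_rpow hq r).mul hw

lemma sh2_diff {j : Fin n} (hq : q 0 ≠ 0) (hw : DifferentiableAt ℝ w q) :
    DifferentiableAt ℝ (sh2 j r w) q := diff_coord.mul ((diff_rpow hq r).mul hw)

lemma pd0_sh1 (hq : q 0 ≠ 0) (hw : DifferentiableAt ℝ w q) (hr : r' = r - 1) :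
    pd 0 (sh1 r w) q = r * sh1 r' w q + sh1 r (pd 0 w) q := by
  unfold sh1
  rw [pd_mul (diff_rpow hq r) hw, pd_rpow hq r, hr]
  simp [ev]
  ring

lemma pds_sh1 (l : Fin n) (hq : q 0 ≠ 0) (hw : DifferentiableAt ℝ w q) :
    pd l.succ (sh1 r w) q = sh1 r (pd l.succ w) q := by
  unfold sh1
  rw [pd_mul (diff_rpow hq r) hw, pd_rpow hq r]
  simp [ev, Pi.single_apply, (Fin.succ_ne_zero l).symm]

lemma pd0_sh2 {j : Fin n} (hq : q 0 ≠ 0) (hw : DifferentiableAt ℝ w q) (hr : r' = r - 1) :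
    pd 0 (sh2 j r w) q = r * sh2 j r' w q + sh2 j r (pd 0 w) q := by
  unfold sh2
  rw [pd_mul diff_coord ((diff_rpow hq r).fun_mul hw), pd_coord,
    pd_mul (diff_rpow hq r) hw, pd_rpow hq r, hr]
  simp [ev, Pi.single_eq_of_ne (Fin.succ_ne_zero j)]
  ring

lemma pds_sh2 {j : Fin n} (l : Fin n) (hq : q 0 ≠ 0) (hw : DifferentiableAt ℝ w q) :
    pd l.succ (sh2 j r w) q = (if j = l then 1 else 0) * sh1 r w q + sh2 j r (pd l.succ w) q := by
  unfold sh2 sh1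
  rw [pd_mul diff_coord ((diff_rpow hq r).fun_mul hw), pd_coord,
    pd_mul (diff_rpow hq r) hw, pd_rpow hq r]
  have h0 : ev l.succ (0 : Fin (n+1)) = 0 := by
    simp [ev, Pi.single_apply, (Fin.succ_ne_zero l).symm]
  have h1 : ev l.succ j.succ = (if j = l then 1 else 0) := by
    simp [ev, Pi.single_apply, Fin.succ_inj]
  rw [h0, h1]; ring


end shapes

section comb
variable {k : ℕ} {q : Fin k → ℝ} {l : Fin k}

lemma pd_comb2 (c1 c2 : ℝ) {A B : (Fin k → ℝ) → ℝ}
    (hA : DifferentiableAt ℝ A q) (hB : DifferentiableAt ℝ B q) :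
    pd l (fun x => c1 * A x + c2 * B x) q = c1 * pd l A q + c2 * pd l B q := by
  rw [pd_add (hA.const_mul c1) (hB.const_mul c2), pd_const_mul c1 hA, pd_const_mul c2 hB]

lemma pd_comb3 (c1 c2 c3 : ℝ) {A B C : (Fin k → ℝ) → ℝ}
    (hA : DifferentiableAt ℝ A q) (hB : DifferentiableAt ℝ B q) (hC : DifferentiableAt ℝ C q) :
    pd l (fun x => c1 * A x + c2 * B x + c3 * C x) q
      = c1 * pd l A q + c2 * pd l B q + c3 * pd l C q := by
  rw [pd_add ((hA.const_mul c1).fun_add (hB.const_mul c2)) (hC.const_mul c3),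
    pd_comb2 c1 c2 hA hB, pd_const_mul c3 hC]

lemma pd_comb4 (c1 c2 c3 c4 : ℝ) {A B C D : (Fin k → ℝ) → ℝ}
    (hA : DifferentiableAt ℝ A q) (hB : DifferentiableAt ℝ B q) (hC : DifferentiableAt ℝ C q)
    (hD : DifferentiableAt ℝ D q) :
    pd l (fun x => c1 * A x + c2 * B x + c3 * C x + c4 * D x) q
      = c1 * pd l A q + c2 * pd l B q + c3 * pd l C q + c4 * pd l D q := by
  rw [pd_add (((hA.const_mul c1).fun_add (hB.const_mul c2)).fun_add (hC.const_mul c3)) (hD.const_mul c4),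
    pd_comb3 c1 c2 c3 hA hB hC, pd_const_mul c4 hD]

end comb


/-- `[P, L̄ᵢ] = −m(m+2)(xᵢ/t^{m/2+1}) P + (m(m+2)/(4t²)) L̄ᵢ` on `{t > 0}`. -/
theorem stmt11 (n m : ℕ) (u : (Fin (n + 1) → ℝ) → ℝ) (hu : ContDiff ℝ (⊤ : ℕ∞) u)
    (p : Fin (n + 1) → ℝ) (hp : 0 < p 0) (i : Fin n) :
    Tric n m (Lb n m i u) p - Lb n m i (Tric n m u) p =
      -(m * (m + 2)) * (p i.succ / p 0 ^ ((m : ℝ) / 2 + 1)) * Tric n m u p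
        + (m * (m + 2) / (4 * p 0 ^ 2)) * Lb n m i u p := by
  set a : ℝ := (m : ℝ) / 2 with ha
  set c : ℝ := (m : ℝ) + 2 with hc
  have dd : ∀ {v : (Fin (n+1) → ℝ) → ℝ}, ContDiff ℝ (⊤ : ℕ∞) v → ∀ q, DifferentiableAt ℝ v q :=
    fun h q => (h.differentiable (by simp)).differentiableAt
  set U : Set (Fin (n+1) → ℝ) := {q | 0 < q 0} with hUdef
  have hU : IsOpen U := isOpen_lt continuous_const (continuous_apply 0)
  have hpU : p ∈ U := hp
  have hp0 : p 0 ≠ 0 := ne_of_gt hp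
  have heq : ∀ (f g : (Fin (n+1) → ℝ) → ℝ), (∀ x ∈ U, f x = g x) → ∀ q ∈ U, f =ᶠ[𝓝 q] g :=
    fun f g h q hq => Filter.eventuallyEq_of_mem (hU.mem_nhds hq) h
  -- smoothness of iterated derivatives
  have s0 : ContDiff ℝ (⊤ : ℕ∞) (pd (0 : Fin (n+1)) u) := pd_smooth hu
  have si : ContDiff ℝ (⊤ : ℕ∞) (pd i.succ u) := pd_smooth hu
  have s00 : ContDiff ℝ (⊤ : ℕ∞) (pd 0 (pd (0 : Fin (n+1)) u)) := pd_smooth s0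
  have s0i : ContDiff ℝ (⊤ : ℕ∞) (pd 0 (pd i.succ u)) := pd_smooth si
  -- step 1 : local formula for Lb u
  have hg : ∀ x ∈ U, Lb n m i u x
      = 2 * sh1 (a+1) (pd i.succ u) x + c * sh2 i (-a) (pd 0 u) x := by
    intro x hx
    have hx0 : (0:ℝ) ≤ x 0 := le_of_lt hx
    simp only [Lb, sh1, sh2, ← ha, ← hc]
    rw [Real.rpow_neg hx0]
    ring
  -- step 2 : first derivatives of Lb u on U
  have hg0 : ∀ q ∈ U, pd 0 (Lb n m i u) q =
      (2*(a+1)) * sh1 a (pd i.succ u) q + 2 * sh1 (a+1) (pd 0 (pd i.succ u)) q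
        + (-(c*a)) * sh2 i (-a-1) (pd 0 u) q + c * sh2 i (-a) (pd 0 (pd 0 u)) q := by
    intro q hq
    have hq0 : q 0 ≠ 0 := ne_of_gt hq
    rw [pd_congr (heq _ _ hg q hq),
      pd_comb2 2 c (sh1_diff hq0 (dd si q)) (sh2_diff hq0 (dd s0 q)),
      pd0_sh1 hq0 (dd si q) (show a = a + 1 - 1 by ring),
      pd0_sh2 hq0 (dd s0 q) (show -a-1 = -a - 1 from rfl)]
    ring
  have hgj : ∀ (l : Fin n), ∀ q ∈ U, pd l.succ (Lb n m i u) q =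
      2 * sh1 (a+1) (pd l.succ (pd i.succ u)) q
        + (c * (if i = l then 1 else 0)) * sh1 (-a) (pd 0 u) q
        + c * sh2 i (-a) (pd l.succ (pd 0 u)) q := by
    intro l q hq
    have hq0 : q 0 ≠ 0 := ne_of_gt hq
    rw [pd_congr (heq _ _ hg q hq),
      pd_comb2 2 c (sh1_diff hq0 (dd si q)) (sh2_diff hq0 (dd s0 q)),
      pds_sh1 l hq0 (dd si q), pds_sh2 l hq0 (dd s0 q)]
    ring
  -- step 3 : second derivatives at p
  have hD00 : pd 0 (pd 0 (Lb n m i u)) p =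
      (2*(a+1)) * (a * sh1 (a-1) (pd i.succ u) p + sh1 a (pd 0 (pd i.succ u)) p)
      + 2 * ((a+1) * sh1 a (pd 0 (pd i.succ u)) p + sh1 (a+1) (pd 0 (pd 0 (pd i.succ u))) p)
      + (-(c*a)) * ((-a-1) * sh2 i (-a-2) (pd 0 u) p + sh2 i (-a-1) (pd 0 (pd 0 u)) p)
      + c * ((-a) * sh2 i (-a-1) (pd 0 (pd 0 u)) p + sh2 i (-a) (pd 0 (pd 0 (pd 0 u))) p) := by
    rw [pd_congr (heq _ _ hg0 p hpU),
      pd_comb4 (2*(a+1)) 2 (-(c*a)) c (sh1_diff hp0 (dd si p)) (sh1_diff hp0 (dd s0i p))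
        (sh2_diff hp0 (dd s0 p)) (sh2_diff hp0 (dd s00 p)),
      pd0_sh1 hp0 (dd si p) (show a - 1 = a - 1 from rfl),
      pd0_sh1 hp0 (dd s0i p) (show a = a + 1 - 1 by ring),
      pd0_sh2 hp0 (dd s0 p) (show -a-2 = -a-1 - 1 by ring),
      pd0_sh2 hp0 (dd s00 p) (show -a-1 = -a - 1 from rfl)]
  have hDjj : ∀ l : Fin n, pd l.succ (pd l.succ (Lb n m i u)) p =
      2 * sh1 (a+1) (pd l.succ (pd l.succ (pd i.succ u))) p
        + (2*c*(if i = l then 1 else 0)) * sh1 (-a) (pd l.succ (pd 0 u)) p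
        + c * sh2 i (-a) (pd l.succ (pd l.succ (pd 0 u))) p := by
    intro l
    rw [pd_congr (heq _ _ (hgj l) p hpU),
      pd_comb3 2 (c * (if i = l then 1 else 0)) c
        (sh1_diff hp0 (dd (pd_smooth si) p)) (sh1_diff hp0 (dd s0 p))
        (sh2_diff hp0 (dd (pd_smooth s0) p)),
      pds_sh1 l hp0 (dd (pd_smooth si) p), pds_sh1 l hp0 (dd s0 p),
      pds_sh2 l hp0 (dd (pd_smooth s0) p)]
    ring
  -- step 4 : sum over j
  have hkey : ∀ (f : Fin n → ℝ) (d : ℝ), (∑ l, (d * (if i = l then 1 else 0)) * f l) = d * f i := by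
    intro f d
    have h1 : ∀ l : Fin n, (d * (if i = l then 1 else 0)) * f l
        = if i = l then d * f l else 0 := by
      intro l; by_cases h : i = l <;> simp [h]
    rw [Finset.sum_congr rfl fun l _ => h1 l, Finset.sum_ite_eq]
    simp
  have hsum : ∑ l : Fin n, pd l.succ (pd l.succ (Lb n m i u)) p =
      2 * (p 0 ^ (a+1:ℝ) * ∑ l : Fin n, pd l.succ (pd l.succ (pd i.succ u)) p)
        + 2*c*(p 0 ^ (-a:ℝ) * pd i.succ (pd 0 u) p)
        + c * (p i.succ * (p 0 ^ (-a:ℝ) * ∑ l : Fin n, pd l.succ (pd l.succ (pd 0 u)) p)) := by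
    rw [Finset.sum_congr rfl fun l _ => hDjj l, Finset.sum_add_distrib, Finset.sum_add_distrib,
      hkey (fun l => sh1 (-a) (pd l.succ (pd 0 u)) p) (2*c)]
    simp only [sh1, sh2, ← Finset.mul_sum]
    try ring
  -- step 5 : derivatives of Tric u
  have dS : ∀ q, DifferentiableAt ℝ (fun x => ∑ l : Fin n, pd l.succ (pd l.succ u) x) q :=
    fun q => DifferentiableAt.fun_sum (fun l _ => dd (pd_smooth (pd_smooth hu)) q)
  have hTk : ∀ k : Fin (n+1), pd k (Tric n m u) p = pd k (pd 0 (pd 0 u)) p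
      - ((m:ℝ) * p 0 ^ (m-1) * ev k 0 * (∑ l : Fin n, pd l.succ (pd l.succ u) p)
        + p 0 ^ m * ∑ l : Fin n, pd k (pd l.succ (pd l.succ u)) p) := by
    intro k
    have h1 : Tric n m u
        = fun q => pd 0 (pd 0 u) q - q 0 ^ m * ∑ l : Fin n, pd l.succ (pd l.succ u) q := rfl
    rw [h1, pd_sub (dd s00 p) ((diff_pow m).fun_mul (dS p)),
      pd_mul (diff_pow m) (dS p), pd_pow m,
      pd_sum (f := fun l : Fin n => pd l.succ (pd l.succ u)) (fun l _ => dd (pd_smooth (pd_smooth hu)) p)]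
  -- commutation
  have hc1 : pd i.succ (pd 0 (pd (0 : Fin (n+1)) u)) = pd 0 (pd 0 (pd i.succ u)) := by
    rw [pd_comm (u := pd 0 u) s0, pd_comm (u := u) hu]
  have hc2 : ∀ l : Fin n, pd i.succ (pd l.succ (pd l.succ u)) = pd l.succ (pd l.succ (pd i.succ u)) := by
    intro l
    rw [pd_comm (u := pd l.succ u) (pd_smooth hu), pd_comm (u := u) hu]
  have hc3 : ∀ l : Fin n, pd (0 : Fin (n+1)) (pd l.succ (pd l.succ u)) = pd l.succ (pd l.succ (pd 0 u)) := by
    intro l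
    rw [pd_comm (u := pd l.succ u) (pd_smooth hu), pd_comm (u := u) hu]
  have hc4 : pd i.succ (pd (0 : Fin (n+1)) u) = pd 0 (pd i.succ u) := pd_comm hu
  have hev1 : ev (i.succ : Fin (n+1)) 0 = 0 := by
    simp [ev, Pi.single_apply, (Fin.succ_ne_zero i).symm]
  have hev0 : ev (0 : Fin (n+1)) 0 = 1 := by simp [ev]
  -- step 6 : Lb (Tric u)
  have hLbT : Lb n m i (Tric n m u) p =
      2 * p 0 ^ (a+1:ℝ) * (pd 0 (pd 0 (pd i.succ u)) p
          - p 0 ^ m * ∑ l : Fin n, pd l.succ (pd l.succ (pd i.succ u)) p)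
        + c * (p i.succ / p 0 ^ (a:ℝ)) * (pd 0 (pd 0 (pd 0 u)) p
          - ((m:ℝ) * p 0 ^ (m-1) * (∑ l : Fin n, pd l.succ (pd l.succ u) p)
            + p 0 ^ m * ∑ l : Fin n, pd l.succ (pd l.succ (pd 0 u)) p)) := by
    have hs2 : ∑ l : Fin n, pd i.succ (pd l.succ (pd l.succ u)) p
        = ∑ l : Fin n, pd l.succ (pd l.succ (pd i.succ u)) p :=
      Finset.sum_congr rfl (fun l _ => by rw [hc2 l])
    have hs3 : ∑ l : Fin n, pd (0 : Fin (n+1)) (pd l.succ (pd l.succ u)) p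
        = ∑ l : Fin n, pd l.succ (pd l.succ (pd 0 u)) p :=
      Finset.sum_congr rfl (fun l _ => by rw [hc3 l])
    simp only [Lb, ← ha, ← hc]
    rw [hTk i.succ, hTk 0, hev1, hev0, hc1, hs2, hs3]
    ring
  -- step 7 : assemble
  have hTLb : Tric n m (Lb n m i u) p = pd 0 (pd 0 (Lb n m i u)) p
      - p 0 ^ m * ∑ l : Fin n, pd l.succ (pd l.succ (Lb n m i u)) p := rfl
  have hTru : Tric n m u p = pd 0 (pd 0 u) p
      - p 0 ^ m * ∑ l : Fin n, pd l.succ (pd l.succ u) p := rfl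
  have hLbu : Lb n m i u p = 2 * p 0 ^ (a+1:ℝ) * pd i.succ u p
      + c * (p i.succ / p 0 ^ (a:ℝ)) * pd 0 u p := by
    simp only [Lb, ← ha, ← hc]
  rw [hTLb, hD00, hsum, hLbT, hTru, hLbu, hc4]
  simp only [sh1, sh2]
  -- power bookkeeping
  set s : ℝ := p 0 ^ (a:ℝ) with hs
  have hspos : 0 < s := Real.rpow_pos_of_pos hp a
  have hm2 : (m:ℝ) = 2*a := by rw [ha]; ring
  have e3 : p 0 ^ (a+1:ℝ) = s * p 0 := by
    rw [Real.rpow_add hp, Real.rpow_one, ← hs]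
  have e1 : p 0 ^ (a-1:ℝ) = s / p 0 := by
    rw [Real.rpow_sub hp, Real.rpow_one, ← hs]
  have e4 : p 0 ^ (-a:ℝ) = s⁻¹ := by
    rw [Real.rpow_neg hp.le, ← hs]
  have e5 : p 0 ^ (-a-1:ℝ) = (s * p 0)⁻¹ := by
    rw [show (-a-1:ℝ) = -(a+1) by ring, Real.rpow_neg hp.le, e3]
  have e6 : p 0 ^ (-a-2:ℝ) = (s * p 0 * p 0)⁻¹ := by
    rw [show (-a-2:ℝ) = -(a+1+1) by ring, Real.rpow_neg hp.le, Real.rpow_add hp,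
      Real.rpow_one, e3]
  have e7 : p 0 ^ (m:ℕ) = s * s := by
    rw [← Real.rpow_natCast (p 0) m, hm2, show (2*a:ℝ) = a + a by ring, Real.rpow_add hp, ← hs]
  have e8 : (m:ℝ) * p 0 ^ (m-1:ℕ) = 2*a*(s*s)/ p 0 := by
    rcases Nat.eq_zero_or_pos m with h0 | h1
    · have ha0 : a = 0 := by rw [ha, h0]; norm_num
      rw [h0, ha0]; simp
    · have h2 : p 0 ^ (m-1:ℕ) = p 0 ^ (m:ℕ) / p 0 := by
        rw [eq_div_iff hp0, ← pow_succ, Nat.sub_add_cancel h1]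
      rw [h2, e7, hm2]; ring
  have hc2a : c = 2*a + 2 := by rw [hc, hm2]
  rw [e3, e1, e4, e5, e6, e7, e8, hm2, hc2a]
  field_simp
  ring
end
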